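/- Let i ≥ 1 be an integer and consider the linear interpolation g(t) = (i+2−t)·K_R/((i+1)·n_T) + (t−i−1)·K_R/((i+2)·n_T) for t ∈ [i, i+1] (with K_R, n_T > 0). Then the ratio of the linear interpolation of K_R/(t·n_T) between the points t = i and t = i+1, namely h(t) = (i+1−t)·K_R/(i·n_T) + (t−i)·K_R/((i+1)·n_T), to g(t) is at most 3/2 for all t ∈ [i, i+1], with the maximum ratio attained at t = i where h(i)/g(i) = 1 + 2/(i² + 3i). -/
import Mathlib


/-- Gap computation for `μK_T ∈ [i, i+1]`: the ratio of the linear interpolation `h` of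
`K_R/(t·n_T)` at integer points to the subgradient lower bound `g` is at most `3/2` on
`[i, i+1]`, with maximum at `t = i` where `h(i)/g(i) = 1 + 2/(i² + 3i)`. -/
theorem interpolation_gap (i : ℕ) (hi : 1 ≤ i) (K_R n_T : ℝ) (hK_R : 0 < K_R)
    (hn_T : 0 < n_T) :
    let g := fun t : ℝ =>
      ((i : ℝ) + 2 - t) * K_R / (((i : ℝ) + 1) * n_T) +
        (t - (i : ℝ) - 1) * K_R / (((i : ℝ) + 2) * n_T)
    let h := fun t : ℝ =>
      ((i : ℝ) + 1 - t) * K_R / ((i : ℝ) * n_T) +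
        (t - (i : ℝ)) * K_R / (((i : ℝ) + 1) * n_T)
    (∀ t ∈ Set.Icc (i : ℝ) ((i : ℝ) + 1), h t / g t ≤ 3 / 2) ∧
    h (i : ℝ) / g (i : ℝ) = 1 + 2 / ((i : ℝ) ^ 2 + 3 * i) := by
  intro g h
  have hx : (1 : ℝ) ≤ (i : ℝ) := by exact_mod_cast hi
  have hx0 : (0 : ℝ) < (i : ℝ) := by linarith
  have hx1 : (0 : ℝ) < (i : ℝ) + 1 := by linarith
  have hx2 : (0 : ℝ) < (i : ℝ) + 2 := by linarith
  have hgeq : ∀ t : ℝ, g t = K_R * (2 * (i : ℝ) + 3 - t) / (((i : ℝ) + 1) * ((i : ℝ) + 2) * n_T) := by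
    intro t
    show ((i : ℝ) + 2 - t) * K_R / (((i : ℝ) + 1) * n_T) +
      (t - (i : ℝ) - 1) * K_R / (((i : ℝ) + 2) * n_T) = _
    field_simp
    ring
  have hheq : ∀ t : ℝ, h t = K_R * (2 * (i : ℝ) + 1 - t) / ((i : ℝ) * ((i : ℝ) + 1) * n_T) := by
    intro t
    show ((i : ℝ) + 1 - t) * K_R / ((i : ℝ) * n_T) +
      (t - (i : ℝ)) * K_R / (((i : ℝ) + 1) * n_T) = _
    field_simp
    ring
  constructor
  · intro t ht
    obtain ⟨ht1, ht2⟩ := ht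
    have hgpos : 0 < g t := by
      rw [hgeq]
      apply div_pos
      · apply mul_pos hK_R; linarith
      · positivity
    rw [div_le_iff₀ hgpos, hgeq, hheq, ← mul_div_assoc,
      div_le_div_iff₀ (by positivity) (by positivity)]
    have a1 : (0:ℝ) ≤ K_R * n_T * (((i:ℝ)+1) * ((((i:ℝ)+1-t)) * (((i:ℝ)-1)*((i:ℝ)+4)))) := by
      apply mul_nonneg (mul_nonneg hK_R.le hn_T.le)
      apply mul_nonneg hx1.le
      apply mul_nonneg (by linarith) (by nlinarith)
    have a2 : (0:ℝ) ≤ K_R * n_T * (((i:ℝ)+1) * ((t-(i:ℝ)) * ((i:ℝ)*((i:ℝ)+2)))) := by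
      apply mul_nonneg (mul_nonneg hK_R.le hn_T.le)
      apply mul_nonneg hx1.le
      apply mul_nonneg (by linarith) (by positivity)
    nlinarith [a1, a2]
  · have hne : ((i : ℝ) ^ 2 + 3 * i) ≠ 0 := by nlinarith
    have h3 : ((i : ℝ) + 3) ≠ 0 := by linarith
    have hi0 : ((i : ℝ)) ≠ 0 := ne_of_gt hx0
    have hi1 : ((i : ℝ) + 1) ≠ 0 := ne_of_gt hx1
    have hi2 : ((i : ℝ) + 2) ≠ 0 := ne_of_gt hx2
    have hgne : g (i : ℝ) ≠ 0 := by
      rw [hgeq]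
      apply ne_of_gt
      apply div_pos (by nlinarith) (by positivity)
    rw [div_eq_iff hgne, hgeq, hheq]
    field_simp
    ring
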